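/- Let $M \leq GL_2(\mathbb{Z})$ be the subgroup generated by the matrices $\alpha = \begin{pmatrix} -1 & 2 \\ 0 & 1 \end{pmatrix}$, $\beta = \begin{pmatrix} 1 & 0 \\ 2 & -1 \end{pmatrix}$, and $\kappa = \begin{pmatrix} 0 & 1 \\ 1 & 0 \end{pmatrix}$ (acting on column vectors $(u, v)^T$). Then the orbit of the vector $(1, 0)$ under $M$ is exactly the set $\{(u, v) \in \mathbb{Z}^2 : u - v = 1 \text{ or } u - v = -1\}$. In particular, $M$ is an infinite group. -/

import Mathlib

def Amat : Matrix (Fin 2) (Fin 2) ℤ := !![-1, 2; 0, 1]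
def Bmat : Matrix (Fin 2) (Fin 2) ℤ := !![1, 0; 2, -1]
def Kmat : Matrix (Fin 2) (Fin 2) ℤ := !![0, 1; 1, 0]

lemma Amat_sq : Amat * Amat = 1 := by decide
lemma Bmat_sq : Bmat * Bmat = 1 := by decide
lemma Kmat_sq : Kmat * Kmat = 1 := by decide

/-- `α` as an element of `GL₂(ℤ)` (it is an involution). -/
def αGL : GL (Fin 2) ℤ := ⟨Amat, Amat, Amat_sq, Amat_sq⟩
def βGL : GL (Fin 2) ℤ := ⟨Bmat, Bmat, Bmat_sq, Bmat_sq⟩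
def κGL : GL (Fin 2) ℤ := ⟨Kmat, Kmat, Kmat_sq, Kmat_sq⟩

/-!
Write `δ(u, v) = u - v`. Each of `α`, `β`, `κ` satisfies `δ(g w) = -δ(w)`, so `|δ|` is invariant
under the group they generate, and the orbit of `(1, 0)` lies on the two lines `δ = ±1`.
Conversely `τ = κβ` is unipotent: it fixes `(1, 1)` and sends `(1, 0)` to `(1, 0) + (1, 1)`, so
`τᵏ (1, 0) = (k + 1, k)` sweeps out the line `δ = 1` (which also shows `τ` has infinite order),
and `κ` swaps the two lines.
-/

open Matrix

section GeneralLinearGroup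

variable {n R : Type*} [Fintype n] [DecidableEq n] [CommRing R]

lemma GL_inv_mulVec_mulVec (g : GL n R) (w : n → R) :
    (↑g⁻¹ : Matrix n n R) *ᵥ ((g : Matrix n n R) *ᵥ w) = w := by
  rw [mulVec_mulVec, ← Units.val_mul, inv_mul_cancel, Units.val_one, one_mulVec]

def mulVecInvariantSubgroup {X : Type*} (f : (n → R) → X) : Subgroup (GL n R) where
  carrier := {g | ∀ w, f ((g : Matrix n n R) *ᵥ w) = f w}
  mul_mem' {g h} hg hh w := by
    rw [Units.val_mul, ← mulVec_mulVec, hg, hh]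
  one_mem' w := by rw [Units.val_one, one_mulVec]
  inv_mem' {g} hg w := by
    have := hg (↑g⁻¹ *ᵥ w)
    rwa [mulVec_mulVec, ← Units.val_mul, mul_inv_cancel, Units.val_one, one_mulVec, eq_comm] at this

lemma GL_zpow_mulVec_of_mulVec_eq_add {g : GL n R} {v d : n → R}
    (hd : (g : Matrix n n R) *ᵥ d = d) (hv : (g : Matrix n n R) *ᵥ v = v + d) (k : ℤ) :
    (↑(g ^ k) : Matrix n n R) *ᵥ v = v + k • d := by
  induction k using Int.induction_on with
  | zero => simp
  | succ k ih =>
    rw [add_comm (k : ℤ), _root_.zpow_one_add, Units.val_mul, ← mulVec_mulVec, ih, mulVec_add,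
      mulVec_smul, hv, hd]
    module
  | pred k ih =>
    have hd' : (↑g⁻¹ : Matrix n n R) *ᵥ d = d := by
      conv_lhs => rw [← hd]
      exact GL_inv_mulVec_mulVec g d
    have hv' : (↑g⁻¹ : Matrix n n R) *ᵥ v = v - d := by
      rw [← GL_inv_mulVec_mulVec g (v - d), mulVec_sub, hv, hd, add_sub_cancel_right]
    rw [sub_eq_neg_add, _root_.zpow_add, _root_.zpow_neg_one, Units.val_mul, ← mulVec_mulVec, ih,
      mulVec_add, mulVec_smul, hv', hd']
    module

end GeneralLinearGroup

abbrev monodromyGroup : Subgroup (GL (Fin 2) ℤ) := Subgroup.closure {αGL, βGL, κGL}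

def coordDiff (w : Fin 2 → ℤ) : ℤ := w 0 - w 1

lemma coordDiff_mulVec_of_mem_generators {g : GL (Fin 2) ℤ}
    (hg : g ∈ ({αGL, βGL, κGL} : Set (GL (Fin 2) ℤ))) (w : Fin 2 → ℤ) :
    coordDiff ((g : Matrix (Fin 2) (Fin 2) ℤ) *ᵥ w) = -coordDiff w := by
  rcases hg with rfl | rfl | rfl <;>
    simp [coordDiff, αGL, βGL, κGL, Amat, Bmat, Kmat, mulVec, dotProduct, Fin.sum_univ_two] <;>
    ring

lemma abs_coordDiff_mulVec_of_mem {g : GL (Fin 2) ℤ} (hg : g ∈ monodromyGroup) (w : Fin 2 → ℤ) :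
    |coordDiff ((g : Matrix (Fin 2) (Fin 2) ℤ) *ᵥ w)| = |coordDiff w| := by
  have hle : monodromyGroup ≤ mulVecInvariantSubgroup fun w => |coordDiff w| :=
    (Subgroup.closure_le _).mpr fun g hg w => by
      simp only [coordDiff_mulVec_of_mem_generators hg, abs_neg]
  exact hle hg w

lemma κGL_mem : κGL ∈ monodromyGroup := Subgroup.subset_closure (by simp)

lemma κGL_mulVec (u v : ℤ) : (κGL : Matrix (Fin 2) (Fin 2) ℤ) *ᵥ ![u, v] = ![v, u] := by
  ext i; fin_cases i <;> simp [κGL, Kmat]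

def τGL : GL (Fin 2) ℤ := κGL * βGL

lemma τGL_mem : τGL ∈ monodromyGroup :=
  mul_mem κGL_mem (Subgroup.subset_closure (by simp))

lemma coe_τGL : (τGL : Matrix (Fin 2) (Fin 2) ℤ) = !![2, -1; 1, 0] := by
  simp [τGL, κGL, βGL, Kmat, Bmat]

lemma τGL_zpow_mulVec (k : ℤ) :
    (↑(τGL ^ k) : Matrix (Fin 2) (Fin 2) ℤ) *ᵥ ![1, 0] = ![k + 1, k] := by
  rw [GL_zpow_mulVec_of_mulVec_eq_add (d := ![1, 1]) (by rw [coe_τGL]; decide)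
    (by rw [coe_τGL]; decide)]
  ext i
  fin_cases i <;> simp [add_comm]

lemma zpow_τGL_injective : Function.Injective (τGL ^ · : ℤ → GL (Fin 2) ℤ) := fun k l hkl => by
  have h := congrArg (fun g : GL (Fin 2) ℤ => (g : Matrix (Fin 2) (Fin 2) ℤ) *ᵥ ![1, 0]) hkl
  simp only [τGL_zpow_mulVec] at h
  simpa using congrFun h 1

/-- The orbit of `(1,0)` under the subgroup `M ≤ GL₂(ℤ)` generated
by `α, β, κ` is exactly `{(u,v) ∈ ℤ² : u - v = ±1}`; in particular `M` is infinite. -/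
theorem monodromy_orbit :
    {w : Fin 2 → ℤ | ∃ g ∈ Subgroup.closure ({αGL, βGL, κGL} : Set (GL (Fin 2) ℤ)),
        (g : Matrix (Fin 2) (Fin 2) ℤ).mulVec ![1, 0] = w} =
      {w : Fin 2 → ℤ | w 0 - w 1 = 1 ∨ w 0 - w 1 = -1} ∧
    Infinite (Subgroup.closure ({αGL, βGL, κGL} : Set (GL (Fin 2) ℤ))) := by
  refine ⟨Set.ext fun w => ⟨?_, ?_⟩, ?_⟩
  · rintro ⟨g, hg, rfl⟩
    simpa [coordDiff, abs_eq] using abs_coordDiff_mulVec_of_mem hg ![1, 0]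
  · rintro (h | h)
    · refine ⟨τGL ^ w 1, zpow_mem τGL_mem _, ?_⟩
      rw [τGL_zpow_mulVec]
      ext i; fin_cases i <;> simp; omega
    · refine ⟨κGL * τGL ^ w 0, mul_mem κGL_mem (zpow_mem τGL_mem _), ?_⟩
      rw [Units.val_mul, ← mulVec_mulVec, τGL_zpow_mulVec, κGL_mulVec]
      ext i; fin_cases i <;> simp; omega
  · exact Infinite.of_injective (fun k : ℤ => (⟨τGL ^ k, zpow_mem τGL_mem k⟩ : monodromyGroup))
      fun k l hkl => zpow_τGL_injective (congrArg Subtype.val hkl)
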